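/- arXiv:2511.09504 — 2 statements merged into one kernel-verified Lean document; each statement's English description precedes it below -/
import Mathlib

section
/- Let (G1,v1)∨(G2,v2) be a one-point join of two looped simple graphs joined at the vertex v, with adjacency matrices M1 of G1, M2 of G2, and M of G1∨G2. For F ⊆ V(G1∨G2), set F1' = F ∩ (V(G1)∖{v1}), F2' = F ∩ (V(G2)∖{v2}), F1 = F1' ∪ {v1} if v ∈ F and F1 = F1' otherwise, and F2 = F2' ∪ {v2} if v ∈ F and F2 = F2' otherwise. Then M[F] is nonsingular if and only if: (i) in case v ∉ F, det M1[F1] · det M2[F2] = 1 in 𝔽₂; (ii) in case v ∈ F, det M1[F1]·det M2[F2'] + det M1[F1']·det M2[F2] + det M1[{v1}]·det M1[F1']·det M2[F2'] = 1 in 𝔽₂. -/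
open Matrix Polynomial

/-- The principal submatrix of `M` with rows and columns indexed by the finite set `S`;
by convention the determinant of the empty principal submatrix is `1`, so it is nonsingular. -/
def psub {R V : Type*} (M : Matrix V V R) (S : Finset V) : Matrix ↥S ↥S R :=
  M.submatrix Subtype.val Subtype.val

/-- The adjacency matrix of the one-point join `(G1,v1) ∨ (G2,v2)`: the vertex set is
the disjoint union of `V(G1) \ {v1}` and `V(G2)`, where `Sum.inr v2` plays the role of
the identified vertex `v`; it inherits the loop status and all adjacencies of `v1` and
`v2`, and no vertex of `G1 - v1` is adjacent to a vertex of `G2 - v2`. -/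
def onePointJoin {V1 V2 : Type*} [DecidableEq V2] (M1 : Matrix V1 V1 (ZMod 2)) (v1 : V1)
    (M2 : Matrix V2 V2 (ZMod 2)) (v2 : V2) :
    Matrix ({u : V1 // u ≠ v1} ⊕ V2) ({u : V1 // u ≠ v1} ⊕ V2) (ZMod 2) :=
  Matrix.of fun i j =>
    match i, j with
    | Sum.inl a, Sum.inl b => M1 a.1 b.1
    | Sum.inl a, Sum.inr b => if b = v2 then M1 a.1 v1 else 0
    | Sum.inr a, Sum.inl b => if a = v2 then M1 v1 b.1 else 0
    | Sum.inr a, Sum.inr b => M2 a b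

section KeyLemma

variable {R : Type*} [CommRing R] {m n : Type*} [Fintype m] [DecidableEq m]
  [Fintype n] [DecidableEq n]

/-- Bordered matrix `[A c; cᵀ s]`. -/
def bd1 (A : Matrix m m R) (c : m → R) (s : R) : Matrix (m ⊕ Unit) (m ⊕ Unit) R :=
  Matrix.of fun i j =>
    match i, j with
    | Sum.inl a, Sum.inl b => A a b
    | Sum.inl a, Sum.inr _ => c a
    | Sum.inr _, Sum.inl b => c b
    | Sum.inr _, Sum.inr _ => s

/-- Bordered matrix `[s dᵀ; d B]`. -/
def bd2 (B : Matrix n n R) (d : n → R) (s : R) : Matrix (Unit ⊕ n) (Unit ⊕ n) R :=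
  Matrix.of fun i j =>
    match i, j with
    | Sum.inl _, Sum.inl _ => s
    | Sum.inl _, Sum.inr b => d b
    | Sum.inr a, Sum.inl _ => d a
    | Sum.inr a, Sum.inr b => B a b

/-- The one-point join matrix `[A c 0; cᵀ s dᵀ; 0 d B]`. -/
def joinMat (A : Matrix m m R) (B : Matrix n n R) (c : m → R) (d : n → R) (s : R) :
    Matrix ((m ⊕ Unit) ⊕ n) ((m ⊕ Unit) ⊕ n) R :=
  Matrix.of fun i j =>
    match i, j with
    | Sum.inl (Sum.inl a), Sum.inl (Sum.inl b) => A a b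
    | Sum.inl (Sum.inl a), Sum.inl (Sum.inr _) => c a
    | Sum.inl (Sum.inl _), Sum.inr _ => 0
    | Sum.inl (Sum.inr _), Sum.inl (Sum.inl b) => c b
    | Sum.inl (Sum.inr _), Sum.inl (Sum.inr _) => s
    | Sum.inl (Sum.inr _), Sum.inr b => d b
    | Sum.inr _, Sum.inl (Sum.inl _) => 0
    | Sum.inr a, Sum.inl (Sum.inr _) => d a
    | Sum.inr a, Sum.inr b => B a b

lemma det_joinMat (A : Matrix m m R) (B : Matrix n n R) (c : m → R) (d : n → R) (s : R) :
    (joinMat A B c d s).det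
      = (bd1 A c s).det * B.det + A.det * (bd2 B d s).det - s * A.det * B.det := by
  classical
  set J := joinMat A B c d s with hJ
  set v : (m ⊕ Unit) ⊕ n := Sum.inl (Sum.inr ()) with hv
  set r1 : ((m ⊕ Unit) ⊕ n) → R := Sum.elim (Sum.elim c fun _ => s) 0 with hr1
  set r2 : ((m ⊕ Unit) ⊕ n) → R := Sum.elim (Sum.elim 0 fun _ => s) d with hr2
  set r3 : ((m ⊕ Unit) ⊕ n) → R := Sum.elim (Sum.elim 0 fun _ => s) 0 with hr3
  have hrow : J v = r1 + (r2 + (-1 : R) • r3) := by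
    funext j
    rcases j with (a | u) | b <;>
      simp [hJ, hv, hr1, hr2, hr3, joinMat]
  have hsplit : J.det
      = (J.updateRow v r1).det + ((J.updateRow v r2).det + (-1 : R) * (J.updateRow v r3).det) := by
    conv_lhs => rw [← Matrix.updateRow_eq_self J v, hrow]
    rw [Matrix.det_updateRow_add, Matrix.det_updateRow_add, Matrix.det_updateRow_smul]
  have h1 : (J.updateRow v r1).det = (bd1 A c s).det * B.det := by
    have : J.updateRow v r1
        = Matrix.fromBlocks (bd1 A c s) 0
            (Matrix.of fun (b : n) (j : m ⊕ Unit) =>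
              match j with | Sum.inl _ => 0 | Sum.inr _ => d b) B := by
      ext i j
      rcases i with (a | u) | b <;> rcases j with (a' | u') | b' <;>
        simp [Matrix.updateRow_apply, hv, hr1, hJ, joinMat, Matrix.fromBlocks, bd1]
    rw [this, Matrix.det_fromBlocks_zero₁₂]
  set e := Equiv.sumAssoc m Unit n with he
  have h2 : (J.updateRow v r2).det = A.det * (bd2 B d s).det := by
    have : J.updateRow v r2
        = (Matrix.fromBlocks A
            (Matrix.of fun (a : m) (j : Unit ⊕ n) =>
              match j with | Sum.inl _ => c a | Sum.inr _ => 0)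
            0 (bd2 B d s)).submatrix e e := by
      ext i j
      rcases i with (a | u) | b <;> rcases j with (a' | u') | b' <;>
        simp [Matrix.updateRow_apply, hv, hr2, hJ, joinMat, Matrix.fromBlocks, bd2, he,
          Equiv.sumAssoc]
    rw [this, Matrix.det_submatrix_equiv_self, Matrix.det_fromBlocks_zero₂₁]
  have h3 : (J.updateRow v r3).det = A.det * (s * B.det) := by
    have heq : J.updateRow v r3
        = (Matrix.fromBlocks A
            (Matrix.of fun (a : m) (j : Unit ⊕ n) =>
              match j with | Sum.inl _ => c a | Sum.inr _ => 0)
            0 (Matrix.fromBlocks (Matrix.of fun _ _ : Unit => s) 0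
                (Matrix.of fun (b : n) (_ : Unit) => d b) B)).submatrix e e := by
      ext i j
      rcases i with (a | u) | b <;> rcases j with (a' | u') | b' <;>
        simp [Matrix.updateRow_apply, hv, hr3, hJ, joinMat, Matrix.fromBlocks, he,
          Equiv.sumAssoc]
    rw [heq, Matrix.det_submatrix_equiv_self, Matrix.det_fromBlocks_zero₂₁,
      Matrix.det_fromBlocks_zero₁₂,
      show (Matrix.of fun _ _ : Unit => s).det = s from by rw [Matrix.det_unique]; rfl]
  rw [hsplit, h1, h2, h3]; ring

end KeyLemma

/-- Proposition 5.3 (feasibility in a one-point join): let `M` be the adjacency matrix of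
`(G1,v1) ∨ (G2,v2)`, joined at the vertex `v = Sum.inr v2`.  For `F ⊆ V(G1∨G2)`, with
`F1' = F ∩ (V(G1)∖{v1})`, `F2' = F ∩ (V(G2)∖{v2})`, `F1 = F1' ∪ {v1}` if `v ∈ F` and
`F1 = F1'` otherwise, and similarly `F2`, the principal submatrix `M[F]` is nonsingular
iff: (i) when `v ∉ F`, `det M1[F1] · det M2[F2] = 1` in `𝔽₂`; (ii) when `v ∈ F`,
`det M1[F1]·det M2[F2'] + det M1[F1']·det M2[F2] + det M1[{v1}]·det M1[F1']·det M2[F2']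
= 1` in `𝔽₂`. -/
theorem feasible_one_point_join
    {V1 V2 : Type*} [Fintype V1] [DecidableEq V1] [Fintype V2] [DecidableEq V2]
    (M1 : Matrix V1 V1 (ZMod 2)) (hM1 : M1.IsSymm) (v1 : V1)
    (M2 : Matrix V2 V2 (ZMod 2)) (hM2 : M2.IsSymm) (v2 : V2)
    (hloop : M1 v1 v1 = M2 v2 v2)
    (Fs : Finset ({u : V1 // u ≠ v1} ⊕ V2))
    (F1' : Finset V1)
    (hF1' : F1' = (Fs.image (Sum.elim Subtype.val fun _ => v1)).erase v1)
    (F2' : Finset V2)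
    (hF2' : F2' = (Fs.image (Sum.elim (fun _ => v2) id)).erase v2)
    (F1 : Finset V1) (hF1 : F1 = if Sum.inr v2 ∈ Fs then insert v1 F1' else F1')
    (F2 : Finset V2) (hF2 : F2 = if Sum.inr v2 ∈ Fs then insert v2 F2' else F2') :
    (Sum.inr v2 ∉ Fs →
      ((psub (onePointJoin M1 v1 M2 v2) Fs).det ≠ 0 ↔
        (psub M1 F1).det * (psub M2 F2).det = 1))
    ∧ (Sum.inr v2 ∈ Fs →
      ((psub (onePointJoin M1 v1 M2 v2) Fs).det ≠ 0 ↔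
        (psub M1 F1).det * (psub M2 F2').det
          + (psub M1 F1').det * (psub M2 F2).det
          + (psub M1 ({v1} : Finset V1)).det * (psub M1 F1').det * (psub M2 F2').det
          = 1)) := by
  classical
  have hz : ∀ z : ZMod 2, z ≠ 0 ↔ z = 1 := by decide
  have hneg : ∀ z : ZMod 2, -z = z := by decide
  have hmem1 : ∀ x : V1, x ∈ F1' ↔ ∃ h : x ≠ v1, Sum.inl ⟨x, h⟩ ∈ Fs := by
    intro x
    rw [hF1']
    simp only [Finset.mem_erase, Finset.mem_image]
    constructor
    · rintro ⟨hx, (a | b), hi, rfl⟩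
      · exact ⟨a.2, hi⟩
      · exact absurd rfl hx
    · rintro ⟨hx, hmem⟩
      exact ⟨hx, Sum.inl ⟨x, hx⟩, hmem, rfl⟩
  have hmem2 : ∀ y : V2, y ∈ F2' ↔ y ≠ v2 ∧ Sum.inr y ∈ Fs := by
    intro y
    rw [hF2']
    simp only [Finset.mem_erase, Finset.mem_image]
    constructor
    · rintro ⟨hy, (a | b), hi, rfl⟩
      · exact absurd rfl hy
      · exact ⟨hy, hi⟩
    · rintro ⟨hy, hmem⟩
      exact ⟨hy, Sum.inr y, hmem, rfl⟩
  have hv1F1' : v1 ∉ F1' := fun h => absurd rfl ((hmem1 v1).mp h).choose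
  have hv2F2' : v2 ∉ F2' := fun h => absurd rfl ((hmem2 v2).mp h).1
  constructor
  · -- case v ∉ F
    intro hv
    have hne : ∀ b : V2, Sum.inr b ∈ Fs → b ≠ v2 := fun b h hb => hv (hb ▸ h)
    let e : ↥Fs ≃ (↥F1' ⊕ ↥F2') :=
    { toFun := fun i => match i with
        | ⟨Sum.inl a, h⟩ => Sum.inl ⟨a.1, (hmem1 a.1).mpr ⟨a.2, h⟩⟩
        | ⟨Sum.inr b, h⟩ => Sum.inr ⟨b, (hmem2 b).mpr ⟨hne b h, h⟩⟩
      invFun := fun j => match j with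
        | Sum.inl x => ⟨Sum.inl ⟨x.1, ((hmem1 x.1).mp x.2).choose⟩,
            ((hmem1 x.1).mp x.2).choose_spec⟩
        | Sum.inr y => ⟨Sum.inr y.1, ((hmem2 y.1).mp y.2).2⟩
      left_inv := by rintro ⟨(a | b), h⟩ <;> rfl
      right_inv := by rintro (x | y) <;> rfl }
    have hM : psub (onePointJoin M1 v1 M2 v2) Fs
        = (Matrix.fromBlocks (psub M1 F1') 0 0 (psub M2 F2')).submatrix e e := by
      ext ⟨i, hi⟩ ⟨j, hj⟩
      rcases i with a | b <;> rcases j with a' | b'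
      · rfl
      · have hb := hne b' hj
        show (if b' = v2 then M1 a.1 v1 else 0) = _
        rw [if_neg hb]
        rfl
      · have hb := hne b hi
        show (if b = v2 then M1 v1 a'.1 else 0) = _
        rw [if_neg hb]
        rfl
      · rfl
    rw [hF1, if_neg hv, hF2, if_neg hv, hM, Matrix.det_submatrix_equiv_self,
      Matrix.det_fromBlocks_zero₂₁]
    exact hz _
  · -- case v ∈ F
    intro hv
    let A : Matrix ↥F1' ↥F1' (ZMod 2) := psub M1 F1'
    let B : Matrix ↥F2' ↥F2' (ZMod 2) := psub M2 F2'
    let c : ↥F1' → ZMod 2 := fun x => M1 x.1 v1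
    let d : ↥F2' → ZMod 2 := fun y => M2 y.1 v2
    let s : ZMod 2 := M2 v2 v2
    let e : ↥Fs ≃ ((↥F1' ⊕ Unit) ⊕ ↥F2') :=
    { toFun := fun i => match i with
        | ⟨Sum.inl a, h⟩ => Sum.inl (Sum.inl ⟨a.1, (hmem1 a.1).mpr ⟨a.2, h⟩⟩)
        | ⟨Sum.inr b, h⟩ =>
            if hb : b = v2 then Sum.inl (Sum.inr ())
            else Sum.inr ⟨b, (hmem2 b).mpr ⟨hb, h⟩⟩
      invFun := fun j => match j with
        | Sum.inl (Sum.inl x) => ⟨Sum.inl ⟨x.1, ((hmem1 x.1).mp x.2).choose⟩,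
            ((hmem1 x.1).mp x.2).choose_spec⟩
        | Sum.inl (Sum.inr _) => ⟨Sum.inr v2, hv⟩
        | Sum.inr y => ⟨Sum.inr y.1, ((hmem2 y.1).mp y.2).2⟩
      left_inv := by
        rintro ⟨(a | b), h⟩
        · rfl
        · by_cases hb : b = v2
          · subst hb
            simp only [dif_pos]
          · simp only [dif_neg hb]
      right_inv := by
        rintro ((x | u) | y)
        · rfl
        · cases u
          simp only [dif_pos]
        · have : y.1 ≠ v2 := ((hmem2 y.1).mp y.2).1
          simp only [dif_neg this] }
    have he1 : ∀ (a : {u : V1 // u ≠ v1}) (h : Sum.inl a ∈ Fs),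
        e ⟨Sum.inl a, h⟩ = Sum.inl (Sum.inl ⟨a.1, (hmem1 a.1).mpr ⟨a.2, h⟩⟩) := fun _ _ => rfl
    have he2 : ∀ (b : V2) (h : Sum.inr b ∈ Fs) (hb : b = v2),
        e ⟨Sum.inr b, h⟩ = Sum.inl (Sum.inr ()) := fun _ _ hb => dif_pos hb
    have he3 : ∀ (b : V2) (h : Sum.inr b ∈ Fs) (hb : b ≠ v2),
        e ⟨Sum.inr b, h⟩ = Sum.inr ⟨b, (hmem2 b).mpr ⟨hb, h⟩⟩ := fun _ _ hb => dif_neg hb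
    have hM : psub (onePointJoin M1 v1 M2 v2) Fs = (joinMat A B c d s).submatrix e e := by
      ext ⟨i, hi⟩ ⟨j, hj⟩
      rcases i with a | b <;> rcases j with a' | b'
      · rfl
      · rcases eq_or_ne b' v2 with hb | hb
        · rw [Matrix.submatrix_apply, he1, he2 b' hj hb]
          show (if b' = v2 then M1 a.1 v1 else 0) = _
          rw [if_pos hb]
          rfl
        · rw [Matrix.submatrix_apply, he1, he3 b' hj hb]
          show (if b' = v2 then M1 a.1 v1 else 0) = _
          rw [if_neg hb]
          rfl
      · rcases eq_or_ne b v2 with hb | hb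
        · rw [Matrix.submatrix_apply, he2 b hi hb, he1]
          show (if b = v2 then M1 v1 a'.1 else 0) = _
          rw [if_pos hb]
          exact hM1.apply a'.1 v1
        · rw [Matrix.submatrix_apply, he3 b hi hb, he1]
          show (if b = v2 then M1 v1 a'.1 else 0) = _
          rw [if_neg hb]
          rfl
      · rcases eq_or_ne b v2 with hb | hb <;> rcases eq_or_ne b' v2 with hb' | hb'
        · rw [Matrix.submatrix_apply, he2 b hi hb, he2 b' hj hb']
          show M2 b b' = s
          rw [hb, hb']
        · rw [Matrix.submatrix_apply, he2 b hi hb, he3 b' hj hb']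
          show M2 b b' = M2 b' v2
          rw [hb]
          exact hM2.apply b' v2
        · rw [Matrix.submatrix_apply, he3 b hi hb, he2 b' hj hb']
          show M2 b b' = M2 b v2
          rw [hb']
        · rw [Matrix.submatrix_apply, he3 b hi hb, he3 b' hj hb']
          rfl
    -- the bordered pieces
    let f1 : ↥(insert v1 F1') ≃ (↥F1' ⊕ Unit) :=
    { toFun := fun x => if hx : x.1 = v1 then Sum.inr ()
        else Sum.inl ⟨x.1, (Finset.mem_insert.mp x.2).resolve_left hx⟩
      invFun := fun j => match j with
        | Sum.inl a => ⟨a.1, Finset.mem_insert_of_mem a.2⟩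
        | Sum.inr _ => ⟨v1, Finset.mem_insert_self v1 F1'⟩
      left_inv := by
        rintro ⟨x, hx⟩
        by_cases h : x = v1
        · subst h
          simp only [dif_pos]
        · simp only [dif_neg h]
      right_inv := by
        rintro (a | u)
        · have : a.1 ≠ v1 := fun h => hv1F1' (h ▸ a.2)
          simp only [dif_neg this]
        · cases u
          simp only [dif_pos] }
    have hf1a : ∀ (x : V1) (h : x ∈ insert v1 F1') (hx : x ≠ v1),
        f1 ⟨x, h⟩ = Sum.inl ⟨x, (Finset.mem_insert.mp h).resolve_left hx⟩ :=
      fun _ _ hx => dif_neg hx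
    have hf1b : ∀ (x : V1) (h : x ∈ insert v1 F1') (hx : x = v1),
        f1 ⟨x, h⟩ = Sum.inr () := fun _ _ hx => dif_pos hx
    have hd1 : psub M1 (insert v1 F1') = (bd1 A c s).submatrix f1 f1 := by
      ext ⟨x, hx⟩ ⟨y, hy⟩
      by_cases hxv : x = v1 <;> by_cases hyv : y = v1
      · rw [Matrix.submatrix_apply, hf1b x hx hxv, hf1b y hy hyv]
        show M1 x y = s
        rw [hxv, hyv]
        exact hloop
      · rw [Matrix.submatrix_apply, hf1b x hx hxv, hf1a y hy hyv]
        show M1 x y = M1 y v1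
        rw [hxv]
        exact hM1.apply y v1
      · rw [Matrix.submatrix_apply, hf1a x hx hxv, hf1b y hy hyv]
        show M1 x y = M1 x v1
        rw [hyv]
      · rw [Matrix.submatrix_apply, hf1a x hx hxv, hf1a y hy hyv]
        rfl
    let f2 : ↥(insert v2 F2') ≃ (Unit ⊕ ↥F2') :=
    { toFun := fun y => if hy : y.1 = v2 then Sum.inl ()
        else Sum.inr ⟨y.1, (Finset.mem_insert.mp y.2).resolve_left hy⟩
      invFun := fun j => match j with
        | Sum.inl _ => ⟨v2, Finset.mem_insert_self v2 F2'⟩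
        | Sum.inr a => ⟨a.1, Finset.mem_insert_of_mem a.2⟩
      left_inv := by
        rintro ⟨y, hy⟩
        by_cases h : y = v2
        · subst h
          simp only [dif_pos]
        · simp only [dif_neg h]
      right_inv := by
        rintro (u | a)
        · cases u
          simp only [dif_pos]
        · have : a.1 ≠ v2 := fun h => hv2F2' (h ▸ a.2)
          simp only [dif_neg this] }
    have hf2a : ∀ (y : V2) (h : y ∈ insert v2 F2') (hy : y ≠ v2),
        f2 ⟨y, h⟩ = Sum.inr ⟨y, (Finset.mem_insert.mp h).resolve_left hy⟩ :=
      fun _ _ hy => dif_neg hy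
    have hf2b : ∀ (y : V2) (h : y ∈ insert v2 F2') (hy : y = v2),
        f2 ⟨y, h⟩ = Sum.inl () := fun _ _ hy => dif_pos hy
    have hd2 : psub M2 (insert v2 F2') = (bd2 B d s).submatrix f2 f2 := by
      ext ⟨x, hx⟩ ⟨y, hy⟩
      by_cases hxv : x = v2 <;> by_cases hyv : y = v2
      · rw [Matrix.submatrix_apply, hf2b x hx hxv, hf2b y hy hyv]
        show M2 x y = s
        rw [hxv, hyv]
      · rw [Matrix.submatrix_apply, hf2b x hx hxv, hf2a y hy hyv]
        show M2 x y = M2 y v2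
        rw [hxv]
        exact hM2.apply y v2
      · rw [Matrix.submatrix_apply, hf2a x hx hxv, hf2b y hy hyv]
        show M2 x y = M2 x v2
        rw [hyv]
      · rw [Matrix.submatrix_apply, hf2a x hx hxv, hf2a y hy hyv]
        rfl
    have hds : (psub M1 ({v1} : Finset V1)).det = s := by
      letI : Unique ↥({v1} : Finset V1) :=
        ⟨⟨⟨v1, Finset.mem_singleton_self v1⟩⟩,
          fun a => Subtype.ext (Finset.mem_singleton.mp a.2)⟩
      rw [Matrix.det_unique]
      exact hloop
    rw [hF1, if_pos hv, hF2, if_pos hv, hM, Matrix.det_submatrix_equiv_self, det_joinMat,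
      hd1, hd2, hds, Matrix.det_submatrix_equiv_self, Matrix.det_submatrix_equiv_self,
      sub_eq_add_neg, hneg]
    exact hz _
end

section
/- Let D = (E, 𝓕) be a delta-matroid and let X ⊆ E. If Y ⊆ X, Z ⊆ E∖X, and there exists G ∈ 𝓕 with Y ⊆ G and Z ⊆ E∖G, then there exists F ∈ 𝓕 such that Y ⊆ F, Z ⊆ E∖F, and |X △ F| = min{|X △ F'| : F' ∈ 𝓕}. -/
/-- Lemma 6.1: let `D = (E, 𝓕)` be a delta-matroid (a proper set system satisfying the
Symmetric Exchange Axiom) and `X ⊆ E`.  If `Y ⊆ X`, `Z ⊆ E∖X`, and some `G ∈ 𝓕`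
satisfies `Y ⊆ G` and `Z ⊆ E∖G`, then there is `F ∈ 𝓕` with `Y ⊆ F`, `Z ⊆ E∖F`, and
`|X △ F| = min{|X △ F'| : F' ∈ 𝓕}`. -/
theorem exists_feasible_closest_containing
    {E : Type*} [Fintype E] [DecidableEq E]
    (𝓕 : Finset (Finset E)) (hne : 𝓕.Nonempty)
    (hexchange : ∀ A ∈ 𝓕, ∀ B ∈ 𝓕, ∀ u ∈ symmDiff A B,
      ∃ v ∈ symmDiff A B, symmDiff A {u, v} ∈ 𝓕)
    (X Y Z : Finset E) (hY : Y ⊆ X) (hZ : Z ⊆ Xᶜ)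
    (hG : ∃ G ∈ 𝓕, Y ⊆ G ∧ Z ⊆ Gᶜ) :
    ∃ F ∈ 𝓕, Y ⊆ F ∧ Z ⊆ Fᶜ ∧
      (symmDiff X F).card = 𝓕.inf' hne (fun F' => (symmDiff X F').card) := by
  classical
  obtain ⟨G, hGmem, hYG, hZG⟩ := hG
  set m := 𝓕.inf' hne (fun F' => (symmDiff X F').card) with hm
  suffices h : ∀ n : ℕ, ∀ F ∈ 𝓕, (symmDiff X F).card = m →
      ((Y \ F) ∪ (Z ∩ F)).card ≤ n →
      ∃ F' ∈ 𝓕, Y ⊆ F' ∧ Z ⊆ F'ᶜ ∧ (symmDiff X F').card = m by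
    obtain ⟨F, hF, hFm⟩ := Finset.exists_mem_eq_inf' hne (fun F' => (symmDiff X F').card)
    exact h _ F hF hFm.symm le_rfl
  intro n
  induction n with
  | zero =>
    intro F hF hFm hcard
    have hB : (Y \ F) ∪ (Z ∩ F) = ∅ := Finset.card_eq_zero.1 (Nat.le_zero.1 hcard)
    refine ⟨F, hF, ?_, ?_, hFm⟩
    · intro y hy
      by_contra hyF
      have : y ∈ (Y \ F) ∪ (Z ∩ F) := Finset.mem_union_left _ (Finset.mem_sdiff.2 ⟨hy, hyF⟩)
      simp [hB] at this
    · intro z hz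
      simp only [Finset.mem_compl]
      intro hzF
      have : z ∈ (Y \ F) ∪ (Z ∩ F) := Finset.mem_union_right _ (Finset.mem_inter.2 ⟨hz, hzF⟩)
      simp [hB] at this
  | succ n ih =>
    intro F hF hFm hcard
    rcases eq_or_ne ((Y \ F) ∪ (Z ∩ F)) ∅ with hB | hB
    · exact ih F hF hFm (by simp [hB])
    · obtain ⟨u, hu⟩ := Finset.nonempty_iff_ne_empty.2 hB
      have hYZ : ∀ x, x ∈ Y → x ∉ Z := by
        intro x hx hxZ
        have := hZ hxZ
        simp only [Finset.mem_compl] at this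
        exact this (hY hx)
      set S := symmDiff X F with hS
      have huS : u ∈ S := by
        rcases Finset.mem_union.1 hu with h | h
        · rcases Finset.mem_sdiff.1 h with ⟨h1, h2⟩
          exact Finset.mem_symmDiff.2 (Or.inl ⟨hY h1, h2⟩)
        · rcases Finset.mem_inter.1 h with ⟨h1, h2⟩
          refine Finset.mem_symmDiff.2 (Or.inr ⟨h2, ?_⟩)
          have := hZ h1; simp only [Finset.mem_compl] at this; exact this
      have huFG : u ∈ symmDiff F G := by
        rcases Finset.mem_union.1 hu with h | h
        · rcases Finset.mem_sdiff.1 h with ⟨h1, h2⟩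
          exact Finset.mem_symmDiff.2 (Or.inr ⟨hYG h1, h2⟩)
        · rcases Finset.mem_inter.1 h with ⟨h1, h2⟩
          refine Finset.mem_symmDiff.2 (Or.inl ⟨h2, ?_⟩)
          have := hZG h1; simp only [Finset.mem_compl] at this; exact this
      obtain ⟨v, hvFG, hF'mem⟩ := hexchange F hF G hGmem u huFG
      set F' := symmDiff F {u, v} with hF'def
      have hXF' : symmDiff X F' = symmDiff S {u, v} := by
        rw [hF'def, hS, symmDiff_assoc]
      have hmin : m ≤ (symmDiff X F').card := Finset.inf'_le _ hF'mem
      have hm1 : 1 ≤ m := by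
        rw [← hFm]
        exact Finset.card_pos.2 ⟨u, huS⟩
      -- v ≠ u
      have hvu : v ≠ u := by
        intro hvu
        have hpair : ({u, v} : Finset E) = {u} := by rw [hvu]; simp
        have heq : symmDiff X F' = S.erase u := by
          rw [hXF', hpair]
          ext x
          simp only [Finset.mem_symmDiff, Finset.mem_singleton, Finset.mem_erase]
          constructor
          · rintro (⟨hx, hxu⟩ | ⟨rfl, hxS⟩)
            · exact ⟨hxu, hx⟩
            · exact absurd huS hxS
          · rintro ⟨hxu, hx⟩; exact Or.inl ⟨hx, hxu⟩
        rw [heq, Finset.card_erase_of_mem huS, hFm] at hmin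
        omega
      -- v ∉ S
      have hvS : v ∉ S := by
        intro hvS
        have heq : symmDiff X F' = (S.erase u).erase v := by
          rw [hXF']
          ext x
          simp only [Finset.mem_symmDiff, Finset.mem_insert, Finset.mem_singleton,
            Finset.mem_erase]
          constructor
          · rintro (⟨hx, hxuv⟩ | ⟨(rfl | rfl), hxS⟩)
            · push_neg at hxuv
              exact ⟨hxuv.2, hxuv.1, hx⟩
            · exact absurd huS hxS
            · exact absurd hvS hxS
          · rintro ⟨hxv, hxu, hx⟩
            exact Or.inl ⟨hx, by simp [hxu, hxv]⟩
        have hm2 : 2 ≤ m := by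
          rw [← hFm]
          exact Finset.one_lt_card.2 ⟨u, huS, v, hvS, hvu.symm⟩
        rw [heq, Finset.card_erase_of_mem (Finset.mem_erase.2 ⟨hvu, hvS⟩),
          Finset.card_erase_of_mem huS, hFm] at hmin
        omega
      -- the new symmetric difference has the same cardinality
      have hF'm : (symmDiff X F').card = m := by
        have heq : symmDiff X F' = insert v (S.erase u) := by
          rw [hXF']
          ext x
          simp only [Finset.mem_symmDiff, Finset.mem_insert, Finset.mem_singleton,
            Finset.mem_erase]
          constructor
          · rintro (⟨hx, hxuv⟩ | ⟨(rfl | rfl), hxS⟩)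
            · push_neg at hxuv
              exact Or.inr ⟨hxuv.1, hx⟩
            · exact absurd huS hxS
            · exact Or.inl rfl
          · rintro (rfl | ⟨hxu, hx⟩)
            · exact Or.inr ⟨Or.inr rfl, hvS⟩
            · have hxv : x ≠ v := fun h => hvS (h ▸ hx)
              exact Or.inl ⟨hx, by simp [hxu, hxv]⟩
        rw [heq, Finset.card_insert_of_notMem (fun h => hvS (Finset.mem_erase.1 h).2),
          Finset.card_erase_of_mem huS, hFm]
        omega
      -- membership in F' in terms of F
      have hmemF' : ∀ x, x ∈ F' ↔ ((x ∈ F ∧ x ≠ u ∧ x ≠ v) ∨ ((x = u ∨ x = v) ∧ x ∉ F)) := by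
        intro x
        rw [hF'def]
        simp only [Finset.mem_symmDiff, Finset.mem_insert, Finset.mem_singleton]
        constructor
        · rintro (⟨hx, hxuv⟩ | ⟨hxuv, hx⟩)
          · push_neg at hxuv; exact Or.inl ⟨hx, hxuv⟩
          · exact Or.inr ⟨hxuv, hx⟩
        · rintro (⟨hx, hxu, hxv⟩ | ⟨hxuv, hx⟩)
          · exact Or.inl ⟨hx, by simp [hxu, hxv]⟩
          · exact Or.inr ⟨hxuv, hx⟩
      have huF' : u ∈ F' ↔ u ∉ F := by
        rw [hmemF']
        constructor
        · rintro (⟨_, h, _⟩ | ⟨_, h⟩)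
          · exact absurd rfl h
          · exact h
        · intro h; exact Or.inr ⟨Or.inl rfl, h⟩
      have hvF' : v ∈ F' ↔ v ∉ F := by
        rw [hmemF']
        constructor
        · rintro (⟨_, _, h⟩ | ⟨_, h⟩)
          · exact absurd rfl h
          · exact h
        · intro h; exact Or.inr ⟨Or.inr rfl, h⟩
      have huB : (u ∈ Y ∧ u ∉ F) ∨ (u ∈ Z ∧ u ∈ F) := by
        rcases Finset.mem_union.1 hu with h | h
        · exact Or.inl (Finset.mem_sdiff.1 h)
        · exact Or.inr (Finset.mem_inter.1 h)
      have hvY : v ∈ Y → v ∉ F := by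
        intro h
        rcases Finset.mem_symmDiff.1 hvFG with ⟨_, h2⟩ | ⟨_, h2⟩
        · exact absurd (hYG h) h2
        · exact h2
      have hvZ : v ∈ Z → v ∈ F := by
        intro h
        rcases Finset.mem_symmDiff.1 hvFG with ⟨h1, _⟩ | ⟨h1, _⟩
        · exact h1
        · have := hZG h; simp only [Finset.mem_compl] at this; exact absurd h1 this
      -- the badness strictly decreases
      have hsub : (Y \ F') ∪ (Z ∩ F') ⊆ ((Y \ F) ∪ (Z ∩ F)).erase u := by
        intro x hx
        rcases Finset.mem_union.1 hx with h | h
        · obtain ⟨hxY, hxF'⟩ := Finset.mem_sdiff.1 h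
          by_cases hxu : x = u
          · subst hxu
            rcases huB with ⟨_, hF0⟩ | ⟨hZ0, _⟩
            · exact absurd (huF'.2 hF0) hxF'
            · exact (hYZ _ hxY hZ0).elim
          · by_cases hxv : x = v
            · subst hxv
              exact absurd (hvF'.2 (hvY hxY)) hxF'
            · have hxF : x ∉ F := fun hF0 => hxF' ((hmemF' x).2 (Or.inl ⟨hF0, hxu, hxv⟩))
              exact Finset.mem_erase.2
                ⟨hxu, Finset.mem_union_left _ (Finset.mem_sdiff.2 ⟨hxY, hxF⟩)⟩
        · obtain ⟨hxZ, hxF'⟩ := Finset.mem_inter.1 h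
          by_cases hxu : x = u
          · subst hxu
            rcases huB with ⟨hY0, _⟩ | ⟨_, hF0⟩
            · exact absurd hxZ (hYZ _ hY0)
            · exact absurd hF0 (huF'.1 hxF')
          · by_cases hxv : x = v
            · subst hxv
              exact absurd (hvZ hxZ) (hvF'.1 hxF')
            · have hxF : x ∈ F := by
                rcases (hmemF' x).1 hxF' with ⟨hF0, _, _⟩ | ⟨h', _⟩
                · exact hF0
                · rcases h' with h' | h'
                  · exact absurd h' hxu
                  · exact absurd h' hxv
              exact Finset.mem_erase.2
                ⟨hxu, Finset.mem_union_right _ (Finset.mem_inter.2 ⟨hxZ, hxF⟩)⟩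
      have hlt : ((Y \ F') ∪ (Z ∩ F')).card ≤ n := by
        have h1 := Finset.card_le_card hsub
        have h2 : (((Y \ F) ∪ (Z ∩ F)).erase u).card = ((Y \ F) ∪ (Z ∩ F)).card - 1 :=
          Finset.card_erase_of_mem hu
        omega
      exact ih F' hF'mem hF'm hlt
end
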